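/- For even n, the quotient of S^1 × S^{n-1} by the diagonal antipodal ℤ/2-action is homeomorphic to S^1 × S^{n-1}. -/

import Mathlib

/-! Write `n = 2m` and identify `ℝⁿ` isometrically with `ℂᵐ`, so that unit complex numbers act on
`S^{n-1}`. The map `(z, x) ↦ (z², z • x)` of `S¹ × S^{n-1}` is continuous, onto (square roots exist
in `S¹`), and `(z², z • x) = (w², w • y)` forces `w = ±z`, hence `(w, y) = ±(z, x)`. A continuous
bijection from the compact quotient onto a Hausdorff space is a homeomorphism. -/

/-- The relation identifying `(z, x)` with `(-z, -x)` on `S¹ × S^{n-1}`; the quotient by the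
equivalence relation it generates is exactly the quotient by the diagonal antipodal
`ℤ/2`-action. -/
def lieRel (n : ℕ) :
    (Metric.sphere (0 : ℂ) 1 × Metric.sphere (0 : EuclideanSpace ℝ (Fin n)) 1) →
    (Metric.sphere (0 : ℂ) 1 × Metric.sphere (0 : EuclideanSpace ℝ (Fin n)) 1) → Prop :=
  fun a b => ((b.1 : ℂ) = -(a.1 : ℂ)) ∧
    ((b.2 : EuclideanSpace ℝ (Fin n)) = -(a.2 : EuclideanSpace ℝ (Fin n)))

/-- The quotient of `S¹ × S^{n-1}` by the diagonal antipodal `ℤ/2`-action. -/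
def LieQuot (n : ℕ) : Type := Quot (lieRel n)

noncomputable instance (n : ℕ) : TopologicalSpace (LieQuot n) := instTopologicalSpaceQuot

open Metric Function

noncomputable def Quot.homeomorphOfCompactToT2 {X Y : Type*} [TopologicalSpace X] [CompactSpace X]
    [TopologicalSpace Y] [T2Space Y] {r : X → X → Prop} {f : X → Y} (hf : Continuous f)
    (hsurj : Surjective f) (hfib : ∀ a b, f a = f b ↔ a = b ∨ r a b) : Quot r ≃ₜ Y :=
  let g : Quot r → Y := Quot.lift f fun a b h => (hfib a b).2 (Or.inr h)
  have hinj : Injective g := by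
    rintro ⟨a⟩ ⟨b⟩ h
    rcases (hfib a b).1 h with rfl | hr
    · rfl
    · exact Quot.sound hr
  have hg_surj : Surjective g := fun y => (hsurj y).elim fun a ha => ⟨Quot.mk r a, ha⟩
  Continuous.homeoOfEquivCompactToT2 (f := Equiv.ofBijective g ⟨hinj, hg_surj⟩)
    (continuous_quot_lift _ hf)

section ComplexStructure

variable {W V : Type*} [NormedAddCommGroup W] [NormedSpace ℂ W] [NormedAddCommGroup V]
  [NormedSpace ℝ V] (E : W ≃ₗᵢ[ℝ] V)

noncomputable def transportSmul (z : ℂ) (x : V) : V := E (z • E.symm x)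

theorem norm_transportSmul (z : ℂ) (x : V) : ‖transportSmul E z x‖ = ‖z‖ * ‖x‖ := by
  rw [transportSmul, E.norm_map, norm_smul, E.symm.norm_map]

theorem neg_transportSmul (z : ℂ) (x : V) : transportSmul E (-z) x = -transportSmul E z x := by
  rw [transportSmul, transportSmul, neg_smul, map_neg]

theorem transportSmul_neg (z : ℂ) (x : V) : transportSmul E z (-x) = -transportSmul E z x := by
  rw [transportSmul, transportSmul, map_neg, smul_neg, map_neg]

theorem transportSmul_transportSmul (z w : ℂ) (x : V) :
    transportSmul E z (transportSmul E w x) = transportSmul E (z * w) x := by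
  rw [transportSmul, transportSmul, transportSmul, E.symm_apply_apply, smul_smul]

theorem one_transportSmul (x : V) : transportSmul E 1 x = x := by
  rw [transportSmul, one_smul, E.apply_symm_apply]

theorem transportSmul_inv_transportSmul {z : ℂ} (hz : z ≠ 0) (x : V) :
    transportSmul E z⁻¹ (transportSmul E z x) = x := by
  rw [transportSmul_transportSmul, inv_mul_cancel₀ hz, one_transportSmul]

theorem transportSmul_injective {z : ℂ} (hz : z ≠ 0) : Injective (transportSmul E z) :=
  LeftInverse.injective (transportSmul_inv_transportSmul E hz)

theorem continuous_transportSmul : Continuous fun p : ℂ × V => transportSmul E p.1 p.2 :=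
  E.continuous.comp (continuous_fst.smul (E.symm.continuous.comp continuous_snd))

noncomputable def squareTwist (p : sphere (0 : ℂ) 1 × sphere (0 : V) 1) :
    sphere (0 : ℂ) 1 × sphere (0 : V) 1 :=
  (⟨p.1 * p.1, by simp⟩, ⟨transportSmul E p.1 p.2, by simp [norm_transportSmul]⟩)

theorem continuous_squareTwist : Continuous (squareTwist E) := by
  have h₁ : Continuous fun p : sphere (0 : ℂ) 1 × sphere (0 : V) 1 => (p.1 : ℂ) := by fun_prop
  have h₂ : Continuous fun p : sphere (0 : ℂ) 1 × sphere (0 : V) 1 => (p.2 : V) := by fun_prop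
  exact ((h₁.mul h₁).subtype_mk _).prodMk
    (((continuous_transportSmul E).comp (h₁.prodMk h₂)).subtype_mk _)

theorem squareTwist_eq_squareTwist_iff (a b : sphere (0 : ℂ) 1 × sphere (0 : V) 1) :
    squareTwist E a = squareTwist E b ↔ a = b ∨ ((b.1 : ℂ) = -a.1 ∧ (b.2 : V) = -a.2) := by
  obtain ⟨⟨z, hz⟩, ⟨x, hx⟩⟩ := a
  obtain ⟨⟨w, hw⟩, ⟨y, hy⟩⟩ := b
  have hz₀ : z ≠ 0 := ne_zero_of_mem_unit_sphere ⟨z, hz⟩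
  simp only [squareTwist, Prod.mk.injEq, Subtype.mk.injEq]
  constructor
  · rintro ⟨hsq, hsmul⟩
    rcases mul_self_eq_mul_self_iff.mp hsq with rfl | rfl
    · exact Or.inl ⟨rfl, transportSmul_injective E hz₀ hsmul⟩
    · refine Or.inr ⟨(neg_neg w).symm, ?_⟩
      rw [neg_transportSmul, ← transportSmul_neg] at hsmul
      exact (transportSmul_injective E (neg_ne_zero.mp hz₀) hsmul).symm
  · rintro (⟨rfl, rfl⟩ | ⟨rfl, rfl⟩)
    · exact ⟨rfl, rfl⟩
    · exact ⟨(neg_mul_neg z z).symm, by rw [neg_transportSmul, transportSmul_neg, neg_neg]⟩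

theorem squareTwist_surjective : Surjective (squareTwist E) := by
  rintro ⟨w, y⟩
  obtain ⟨z, hz⟩ := IsAlgClosed.exists_eq_mul_self (w : ℂ)
  have hz₁ : ‖z‖ = 1 := by
    have : ‖z‖ * ‖z‖ = 1 := by rw [← norm_mul, ← hz, norm_eq_of_mem_sphere]
    nlinarith [norm_nonneg z]
  have hzS : z ∈ sphere (0 : ℂ) 1 := by simpa using hz₁
  have hz₀ : z ≠ 0 := ne_zero_of_mem_unit_sphere ⟨z, hzS⟩
  refine ⟨(⟨z, hzS⟩, ⟨transportSmul E z⁻¹ y, by simp [norm_transportSmul, hz₁]⟩), ?_⟩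
  refine Prod.ext (Subtype.ext hz.symm) (Subtype.ext ?_)
  change transportSmul E z (transportSmul E z⁻¹ y) = y
  rw [transportSmul_transportSmul, mul_inv_cancel₀ hz₀, one_transportSmul]

end ComplexStructure

/-- For even `n`, the quotient of `S¹ × S^{n-1}` by the diagonal antipodal `ℤ/2`-action is
homeomorphic to `S¹ × S^{n-1}`. -/
theorem lieQuot_homeomorph_of_even (n : ℕ) (hn : Even n) :
    Nonempty (LieQuot n ≃ₜ
      (Metric.sphere (0 : ℂ) 1 × Metric.sphere (0 : EuclideanSpace ℝ (Fin n)) 1)) := by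
  obtain ⟨m, hm⟩ := hn
  have hrank : Module.finrank ℝ (EuclideanSpace ℂ (Fin m)) = n := by
    rw [finrank_real_of_complex, finrank_euclideanSpace_fin]; omega
  let E := ((stdOrthonormalBasis ℝ (EuclideanSpace ℂ (Fin m))).reindex (finCongr hrank)).repr
  exact ⟨Quot.homeomorphOfCompactToT2 (continuous_squareTwist E) (squareTwist_surjective E)
    (squareTwist_eq_squareTwist_iff E)⟩
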